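/- arXiv:2508.08511 — 2 statements merged into one kernel-verified Lean document; each statement's English description precedes it below -/
import Mathlib

section
/- Let ρ : ℝⁿ → ℝ be smooth and strictly positive, R := (1/2)·log ρ, and let Σ : ℝⁿ → ℝⁿˣⁿ be a C² symmetric matrix field. Then (1/(4ρ))·Δ_Σ ρ = (1/2)·Δ_Σ R + (∇R)ᵀ Σ (∇R) + (1/4 − R/2)·⟨Hess, Σ⟩, where Δ_Σ f := Σ_{i,j} ∂²_{x_i x_j}(Σ_{ij} f) and ⟨Hess, Σ⟩ := Σ_{i,j} ∂²_{x_i x_j} Σ_{ij}. -/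
open Filter MeasureTheory

/-- Partial derivative in the `i`-th coordinate direction. -/
noncomputable def pd {n : ℕ} {E : Type*} [NormedAddCommGroup E] [NormedSpace ℝ E]
    (i : Fin n) (f : (Fin n → ℝ) → E) (x : Fin n → ℝ) : E :=
  fderiv ℝ f x (Pi.single i 1)

/-- Second partial derivative ∂²_{x_i x_j}. -/
noncomputable def pd2 {n : ℕ} {E : Type*} [NormedAddCommGroup E] [NormedSpace ℝ E]
    (i j : Fin n) (f : (Fin n → ℝ) → E) (x : Fin n → ℝ) : E :=
  pd i (fun y => pd j f y) x

/-- Euclidean Laplacian. -/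
noncomputable def lap {n : ℕ} {E : Type*} [NormedAddCommGroup E] [NormedSpace ℝ E]
    (f : (Fin n → ℝ) → E) (x : Fin n → ℝ) : E :=
  ∑ i, pd2 i i f x

/-!
Write `ρ = exp (2 R)`. Then `∂ᵢρ = 2 ∂ᵢR ρ` and `∂ᵢ∂ⱼρ = (2 ∂ᵢ∂ⱼR + 4 ∂ᵢR ∂ⱼR) ρ`, so
expanding `∂ᵢ∂ⱼ(Σᵢⱼ ρ)` and `∂ᵢ∂ⱼ(Σᵢⱼ R)` by the Leibniz rule gives the identity already for
each pair `(i, j)`, before summation.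
-/

open Real

section PartialDerivatives

variable {n : ℕ} {f g : (Fin n → ℝ) → ℝ} {x : Fin n → ℝ}

lemma ContDiff.pd {k m : WithTop ℕ∞} (hf : ContDiff ℝ k f) (hmk : m + 1 ≤ k) (j : Fin n) :
    ContDiff ℝ m (pd j f) :=
  (ContinuousLinearMap.apply ℝ ℝ (Pi.single j 1 : Fin n → ℝ)).contDiff.comp
    (hf.fderiv_right hmk)

lemma pd_add (hf : DifferentiableAt ℝ f x) (hg : DifferentiableAt ℝ g x) (i : Fin n) :
    pd i (fun y => f y + g y) x = pd i f x + pd i g x := by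
  simp only [pd, fderiv_fun_add hf hg, add_apply]

lemma pd_const_mul (hf : DifferentiableAt ℝ f x) (c : ℝ) (i : Fin n) :
    pd i (fun y => c * f y) x = c * pd i f x := by
  simp only [pd, fderiv_const_mul hf, smul_apply, smul_eq_mul]

lemma pd_mul (hf : DifferentiableAt ℝ f x) (hg : DifferentiableAt ℝ g x) (i : Fin n) :
    pd i (fun y => f y * g y) x = pd i f x * g x + f x * pd i g x := by
  simp only [pd, fderiv_fun_mul hf hg, add_apply, smul_apply, smul_eq_mul]
  ring

lemma pd2_mul (hf : ContDiff ℝ 2 f) (hg : ContDiff ℝ 2 g) (i j : Fin n) (x : Fin n → ℝ) :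
    pd2 i j (fun y => f y * g y) x =
      pd2 i j f x * g x + pd j f x * pd i g x + pd i f x * pd j g x + f x * pd2 i j g x := by
  have hfd := hf.differentiable two_ne_zero
  have hgd := hg.differentiable two_ne_zero
  have hpf := (hf.pd (m := 1) (by norm_num) j).differentiable one_ne_zero x
  have hpg := (hg.pd (m := 1) (by norm_num) j).differentiable one_ne_zero x
  have hpd : (fun y => pd j (fun z => f z * g z) y) = fun y => pd j f y * g y + f y * pd j g y :=
    funext fun y => pd_mul (hfd y) (hgd y) j
  unfold pd2
  rw [hpd, pd_add (f := fun y => pd j f y * g y) (g := fun y => f y * pd j g y)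
    (hpf.mul (hgd x)) ((hfd x).mul hpg), pd_mul hpf (hgd x), pd_mul (hfd x) hpg]
  ring

end PartialDerivatives

section ExpTwoMul

variable {n : ℕ} {R : (Fin n → ℝ) → ℝ}

lemma pd_exp_two_mul {y : Fin n → ℝ} (hR : DifferentiableAt ℝ R y) (j : Fin n) :
    pd j (fun z => exp (2 * R z)) y = 2 * pd j R y * exp (2 * R y) := by
  rw [pd, ((hR.hasFDerivAt.const_mul 2).exp).fderiv]
  simp only [smul_apply, smul_eq_mul, pd]
  ring

lemma pd2_exp_two_mul (hR : ContDiff ℝ 2 R) (i j : Fin n) (x : Fin n → ℝ) :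
    pd2 i j (fun z => exp (2 * R z)) x =
      (2 * pd2 i j R x + 4 * pd i R x * pd j R x) * exp (2 * R x) := by
  have hRd := hR.differentiable two_ne_zero
  have hpR := (hR.pd (m := 1) (by norm_num) j).differentiable one_ne_zero x
  have hpd : (fun y => pd j (fun z => exp (2 * R z)) y) =
      fun y => (2 * pd j R y) * exp (2 * R y) :=
    funext fun y => pd_exp_two_mul (hRd y) j
  unfold pd2
  rw [hpd, pd_mul (hpR.const_mul 2) ((hRd x).const_mul 2).exp, pd_const_mul hpR,
    pd_exp_two_mul (hRd x)]
  ring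

lemma pd2_mul_exp_two_mul {s : (Fin n → ℝ) → ℝ} (hs : ContDiff ℝ 2 s) (hR : ContDiff ℝ 2 R)
    (i j : Fin n) (x : Fin n → ℝ) :
    1 / (4 * exp (2 * R x)) * pd2 i j (fun y => s y * exp (2 * R y)) x =
      1 / 2 * pd2 i j (fun y => s y * R y) x + pd i R x * s x * pd j R x +
        (1 / 4 - R x / 2) * pd2 i j s x := by
  have hρ : ContDiff ℝ 2 fun y => exp (2 * R y) := (contDiff_const.mul hR).exp
  have hRd := hR.differentiable two_ne_zero
  rw [pd2_mul hs hρ, pd2_mul hs hR, pd2_exp_two_mul hR, pd_exp_two_mul (hRd x),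
    pd_exp_two_mul (hRd x)]
  field_simp
  ring

end ExpTwoMul

theorem weighted_laplacian_of_half_log_general {n : ℕ} (ρ : (Fin n → ℝ) → ℝ)
    (hρ : ContDiff ℝ 2 ρ) (hpos : ∀ x, 0 < ρ x)
    (R : (Fin n → ℝ) → ℝ) (hR : R = fun x => (1/2) * Real.log (ρ x))
    (Sig : (Fin n → ℝ) → Matrix (Fin n) (Fin n) ℝ)
    (hSig : ∀ i j, ContDiff ℝ 2 (fun x => Sig x i j)) :
    ∀ x,
      (1 / (4 * ρ x)) * (∑ i, ∑ j, pd2 i j (fun y => Sig y i j * ρ y) x) =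
        (1/2) * (∑ i, ∑ j, pd2 i j (fun y => Sig y i j * R y) x) +
        (∑ i, ∑ j, pd i R x * Sig x i j * pd j R x) +
        (1/4 - R x / 2) * (∑ i, ∑ j, pd2 i j (fun y => Sig y i j) x) := by
  intro x
  have hRc : ContDiff ℝ 2 R := hR ▸ contDiff_const.mul (hρ.log fun y => (hpos y).ne')
  have hρR : ρ = fun y => exp (2 * R y) := by
    funext y
    rw [hR, ← mul_assoc, mul_one_div_cancel two_ne_zero, one_mul, exp_log (hpos y)]
  subst hρR
  simp only [Finset.mul_sum, ← Finset.sum_add_distrib]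
  exact Finset.sum_congr rfl fun i _ => Finset.sum_congr rfl fun j _ =>
    pd2_mul_exp_two_mul (hSig i j) hRc i j x

theorem weighted_laplacian_of_half_log {n : ℕ} (ρ : (Fin n → ℝ) → ℝ)
    (hρ : ContDiff ℝ 2 ρ) (hpos : ∀ x, 0 < ρ x)
    (R : (Fin n → ℝ) → ℝ) (hR : R = fun x => (1/2) * Real.log (ρ x))
    (Sig : (Fin n → ℝ) → Matrix (Fin n) (Fin n) ℝ)
    (hSig : ∀ i j, ContDiff ℝ 2 (fun x => Sig x i j))
    (hsymm : ∀ x, (Sig x).IsSymm) :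
    ∀ x,
      (1 / (4 * ρ x)) * (∑ i, ∑ j, pd2 i j (fun y => Sig y i j * ρ y) x) =
        (1/2) * (∑ i, ∑ j, pd2 i j (fun y => Sig y i j * R y) x) +
        (∑ i, ∑ j, pd i R x * Sig x i j * pd j R x) +
        (1/4 - R x / 2) * (∑ i, ∑ j, pd2 i j (fun y => Sig y i j) x) :=
  weighted_laplacian_of_half_log_general ρ hρ hpos R hR Sig hSig
end

section
/- Let R, S : [t₀,t₁]×ℝⁿ → ℝ be C^{1,2}, λ = 1, and ψ(t,x) := exp(R(t,x) + (i/λ)·S(t,x)). Suppose R and S satisfy ∂ₜR = −⟨∇R, ∇S⟩ − (1/2)·ΔS + (1/2)·ΔR + ‖∇R‖² and ∂ₜS = −(1/2)·‖∇S‖² − (1/2)·ΔS (i.e., the SB optimality system with q = 0, f = 0, g = σ = I). Then ψ satisfies the Schrödinger PDE i·∂ₜψ = −(1/2)·Δψ + V·ψ with complex potential V whose real part is (1/2)·ΔR + (1/2)·‖∇R‖² + (1/2)·ΔS and whose imaginary part is (1/2)·ΔR + ‖∇R‖². -/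
open Filter MeasureTheory

lemma pd_eq {n : ℕ} {E : Type*} [NormedAddCommGroup E] [NormedSpace ℝ E]
    {i : Fin n} {f : (Fin n → ℝ) → E} {f' : (Fin n → ℝ) →L[ℝ] E} {x : Fin n → ℝ}
    (hf : HasFDerivAt f f' x) : pd i f x = f' (Pi.single i 1) := by
  rw [pd, hf.fderiv]

section helpers

variable {n : ℕ} {i : Fin n} {x : Fin n → ℝ}

/-- first derivative of `exp (P + I Q)` -/
lemma hasFDerivAt_phi (P Q : (Fin n → ℝ) → ℝ) (hP : DifferentiableAt ℝ P x)
    (hQ : DifferentiableAt ℝ Q x) :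
    HasFDerivAt (fun y => ((P y : ℂ) + Complex.I * (Q y : ℂ)))
      (Complex.ofRealCLM.comp (fderiv ℝ P x)
        + Complex.I • Complex.ofRealCLM.comp (fderiv ℝ Q x)) x := by
  have h1 : HasFDerivAt (fun y => ((P y : ℂ)))
      (Complex.ofRealCLM.comp (fderiv ℝ P x)) x :=
    Complex.ofRealCLM.hasFDerivAt.comp x hP.hasFDerivAt
  have h2 : HasFDerivAt (fun y => ((Q y : ℂ)))
      (Complex.ofRealCLM.comp (fderiv ℝ Q x)) x :=
    Complex.ofRealCLM.hasFDerivAt.comp x hQ.hasFDerivAt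
  exact h1.add (h2.const_smul Complex.I)

lemma pd_phi (P Q : (Fin n → ℝ) → ℝ) (hP : DifferentiableAt ℝ P x)
    (hQ : DifferentiableAt ℝ Q x) :
    pd i (fun y => ((P y : ℂ) + Complex.I * (Q y : ℂ))) x
      = Complex.ofReal (pd i P x) + Complex.I * Complex.ofReal (pd i Q x) := by
  rw [pd_eq (hasFDerivAt_phi P Q hP hQ)]
  simp [pd, smul_eq_mul]

lemma pd_psi (P Q : (Fin n → ℝ) → ℝ) (hP : DifferentiableAt ℝ P x)
    (hQ : DifferentiableAt ℝ Q x) :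
    pd i (fun y => Complex.exp ((P y : ℂ) + Complex.I * (Q y : ℂ))) x
      = Complex.exp ((P x : ℂ) + Complex.I * (Q x : ℂ))
        * (Complex.ofReal (pd i P x) + Complex.I * Complex.ofReal (pd i Q x)) := by
  rw [pd_eq (hasFDerivAt_phi P Q hP hQ).cexp]
  simp [pd, smul_eq_mul]
  ring

lemma pd_contDiff_one {f : (Fin n → ℝ) → ℝ} (hf : ContDiff ℝ 2 f) (j : Fin n) :
    ContDiff ℝ 1 (fun y => pd j f y) := by
  have h : ContDiff ℝ 1 (fderiv ℝ f) := hf.fderiv_right (by norm_num)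
  exact h.clm_apply contDiff_const

lemma pd2_psi (P Q : (Fin n → ℝ) → ℝ) (hP : ContDiff ℝ 2 P) (hQ : ContDiff ℝ 2 Q) :
    pd2 i i (fun y => Complex.exp ((P y : ℂ) + Complex.I * (Q y : ℂ))) x
      = Complex.exp ((P x : ℂ) + Complex.I * (Q x : ℂ))
        * (Complex.ofReal (pd2 i i P x) + Complex.I * Complex.ofReal (pd2 i i Q x)
            + (Complex.ofReal (pd i P x) + Complex.I * Complex.ofReal (pd i Q x))^2) := by
  have hPd : Differentiable ℝ P := hP.differentiable two_ne_zero
  have hQd : Differentiable ℝ Q := hQ.differentiable two_ne_zero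
  have hpdP := pd_contDiff_one hP i
  have hpdQ := pd_contDiff_one hQ i
  have hrw : (fun y => pd i (fun z => Complex.exp ((P z : ℂ) + Complex.I * (Q z : ℂ))) y)
      = fun y => Complex.exp ((P y : ℂ) + Complex.I * (Q y : ℂ))
          * (Complex.ofReal (pd i P y) + Complex.I * Complex.ofReal (pd i Q y)) := by
    funext y
    exact pd_psi P Q (hPd y) (hQd y)
  rw [pd2, hrw]
  -- product rule
  have hu : HasFDerivAt (fun y => Complex.exp ((P y : ℂ) + Complex.I * (Q y : ℂ)))
      _ x := (hasFDerivAt_phi P Q (hPd x) (hQd x)).cexp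
  have hv0 : HasFDerivAt (fun y => (Complex.ofReal (pd i P y) + Complex.I * Complex.ofReal (pd i Q y)))
      (Complex.ofRealCLM.comp (fderiv ℝ (fun y => pd i P y) x)
        + Complex.I • Complex.ofRealCLM.comp (fderiv ℝ (fun y => pd i Q y) x)) x :=
    hasFDerivAt_phi _ _ ((hpdP.differentiable one_ne_zero) x) ((hpdQ.differentiable one_ne_zero) x)
  rw [pd_eq (hu.fun_mul hv0)]
  have e1 : pd2 i i P x = fderiv ℝ (fun y => pd i P y) x (Pi.single i 1) := rfl
  have e2 : pd2 i i Q x = fderiv ℝ (fun y => pd i Q y) x (Pi.single i 1) := rfl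
  simp only [ContinuousLinearMap.add_apply, ContinuousLinearMap.smul_apply,
    ContinuousLinearMap.coe_comp', Function.comp_apply, Complex.ofRealCLM_apply,
    ContinuousLinearMap.coe_smul', Pi.smul_apply, smul_eq_mul, e1, e2, pd]
  ring

end helpers

theorem SB_schrodinger_PDE {n : ℕ} (R S : ℝ → (Fin n → ℝ) → ℝ)
    (hRc : ContDiff ℝ 2 (Function.uncurry R)) (hSc : ContDiff ℝ 2 (Function.uncurry S))
    (ψ : ℝ → (Fin n → ℝ) → ℂ)
    (hψ : ψ = fun t x => Complex.exp ((R t x : ℂ) + Complex.I * (S t x : ℂ)))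
    (hRpde : ∀ t x, deriv (fun τ => R τ x) t =
      -(∑ i, pd i (R t) x * pd i (S t) x) - (1/2) * lap (S t) x
        + (1/2) * lap (R t) x + ∑ i, (pd i (R t) x)^2)
    (hSpde : ∀ t x, deriv (fun τ => S τ x) t =
      -(1/2) * (∑ i, (pd i (S t) x)^2) - (1/2) * lap (S t) x) :
    ∀ t x,
      Complex.I * deriv (fun τ => ψ τ x) t =
        -(1/2) * lap (ψ t) x +
          ((Complex.ofReal ((1/2) * lap (R t) x + (1/2) * (∑ i, (pd i (R t) x)^2)
              + (1/2) * lap (S t) x))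
            + Complex.I * (Complex.ofReal ((1/2) * lap (R t) x + ∑ i, (pd i (R t) x)^2)))
          * ψ t x := by
  subst hψ
  intro t x
  have hRt2 : ContDiff ℝ 2 (R t) := hRc.comp ((contDiff_const (c := t)).prodMk contDiff_id)
  have hSt2 : ContDiff ℝ 2 (S t) := hSc.comp ((contDiff_const (c := t)).prodMk contDiff_id)
  set E : ℂ := Complex.exp ((R t x : ℂ) + Complex.I * (S t x : ℂ)) with hE
  -- time derivative
  have hRtime : HasDerivAt (fun τ => R τ x) (deriv (fun τ => R τ x) t) t := by
    have : DifferentiableAt ℝ (fun τ => R τ x) t := by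
      exact ((hRc.differentiable two_ne_zero) (t, x)).comp t
        ((differentiableAt_id (𝕜 := ℝ) (x := t)).prodMk (differentiableAt_const x))
    exact this.hasDerivAt
  have hStime : HasDerivAt (fun τ => S τ x) (deriv (fun τ => S τ x) t) t := by
    have : DifferentiableAt ℝ (fun τ => S τ x) t := by
      exact ((hSc.differentiable two_ne_zero) (t, x)).comp t
        ((differentiableAt_id (𝕜 := ℝ) (x := t)).prodMk (differentiableAt_const x))
    exact this.hasDerivAt
  have htime : deriv (fun τ => Complex.exp ((R τ x : ℂ) + Complex.I * (S τ x : ℂ))) t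
      = E * (Complex.ofReal (deriv (fun τ => R τ x) t)
          + Complex.I * Complex.ofReal (deriv (fun τ => S τ x) t)) := by
    have h : HasDerivAt (fun τ => ((R τ x : ℂ) + Complex.I * (S τ x : ℂ)))
        (Complex.ofReal (deriv (fun τ => R τ x) t) + Complex.I * Complex.ofReal (deriv (fun τ => S τ x) t)) t :=
      (hRtime.ofReal_comp).add ((hStime.ofReal_comp).const_mul Complex.I)
    exact h.cexp.deriv
  -- laplacian
  have hlapterm : ∀ i : Fin n,
      pd2 i i (fun y => Complex.exp ((R t y : ℂ) + Complex.I * (S t y : ℂ))) x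
        = E * (Complex.ofReal (pd2 i i (R t) x) + Complex.I * Complex.ofReal (pd2 i i (S t) x)
            + (Complex.ofReal (pd i (R t) x) + Complex.I * Complex.ofReal (pd i (S t) x))^2) := by
    intro i
    exact pd2_psi (R t) (S t) hRt2 hSt2
  have hlap : lap (fun y => Complex.exp (Complex.ofReal (R t y) + Complex.I * Complex.ofReal (S t y))) x
      = E * (Complex.ofReal (lap (R t) x + (∑ i, (pd i (R t) x)^2) - ∑ i, (pd i (S t) x)^2)
          + Complex.I * Complex.ofReal (lap (S t) x + 2 * ∑ i, pd i (R t) x * pd i (S t) x)) := by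
    have hterm : ∀ i : Fin n,
        pd2 i i (fun y => Complex.exp (Complex.ofReal (R t y) + Complex.I * Complex.ofReal (S t y))) x
          = E * Complex.ofReal (pd2 i i (R t) x + (pd i (R t) x)^2 - (pd i (S t) x)^2)
            + Complex.I * (E * Complex.ofReal (pd2 i i (S t) x + 2 * (pd i (R t) x * pd i (S t) x))) := by
      intro i
      rw [hlapterm i]
      push_cast
      linear_combination (E * (Complex.ofReal (pd i (S t) x))^2) * Complex.I_sq
    rw [lap, Finset.sum_congr rfl (fun i _ => hterm i), Finset.sum_add_distrib,
      ← Finset.mul_sum, ← Finset.mul_sum, ← Finset.mul_sum, lap, lap]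
    push_cast [Finset.sum_add_distrib, Finset.sum_sub_distrib, Finset.mul_sum]
    ring
  rw [htime, hlap, hRpde t x, hSpde t x]
  push_cast
  linear_combination (E * (-(1/2 : ℂ) * ∑ i, (Complex.ofReal (pd i (S t) x))^2
    - (1/2) * Complex.ofReal (lap (S t) x))) * Complex.I_sq
end
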